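/- Let f be L-smooth and γ-quasar-convex with respect to a global minimizer x*, let R ≥ ‖x₀ − x*‖, and run SGD for T iterations with step sizes α₁, …, α_T all lying in (0, γ/L). Let x̃ be a random iterate equal to x_{t} (for t = 0, …, T−1) with probability proportional to α_{t+1}(γ − L α_{t+1}). Then E[f(x̃) − f(x*)] ≤ R²/(2 ∑_{t=1}^{T} α_t(γ − Lα_t)) + σ² (∑_{t=1}^{T} α_t²)/(∑_{t=1}^{T} α_t(γ − Lα_t)). -/

import Mathlib

/-!
Write `Δₜ = E f(xₜ) - f(x*)`. Expanding `‖xₜ - α g - x*‖²`, the cross term has conditional mean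
`⟪∇f(xₜ), xₜ - x*⟫ ≥ γ (f(xₜ) - f(x*))` by quasar-convexity, while the second moment of `g`
splits into the variance, at most `σ²`, plus `‖∇f(xₜ)‖² ≤ 2L (f(xₜ) - f(x*))`, the smoothness
bound obtained from one gradient step of length `1/L`. Hence
`E‖x_{t+1} - x*‖² ≤ E‖xₜ - x*‖² - 2αₜ₊₁(γ - Lαₜ₊₁) Δₜ + αₜ₊₁² σ²`, and summing over `t < T`
telescopes to the bound.
-/

open MeasureTheory Finset
open scoped RealInnerProductSpace

theorem sum_range_le_of_le_sub_add {D c e : ℕ → ℝ} {T : ℕ}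
    (h : ∀ t < T, D (t + 1) ≤ D t - c t + e t) (hD : 0 ≤ D T) :
    ∑ t ∈ range T, c t ≤ D 0 + ∑ t ∈ range T, e t := by
  have hsum : ∑ t ∈ range T, (D (t + 1) - D t) ≤ ∑ t ∈ range T, (e t - c t) :=
    sum_le_sum fun t ht => by linarith [h t (mem_range.1 ht)]
  rw [sum_range_sub, sum_sub_distrib] at hsum
  linarith

theorem sum_Icc_one_eq_sum_range {M : Type*} [AddCommMonoid M] (u : ℕ → M) (T : ℕ) :
    ∑ t ∈ Icc 1 T, u t = ∑ t ∈ range T, u (t + 1) := by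
  rw [range_eq_Ico, sum_Ico_add' u 0 T 1]
  rfl

section Smooth

variable {E : Type*} [NormedAddCommGroup E] [InnerProductSpace ℝ E] {f : E → ℝ} {f' : E → E}

theorem mul_sub_le_inner_of_quasarConvex {γ : ℝ} (hγ : 0 < γ) {xstar y : E}
    (hqc : f xstar ≥ f y + (1 / γ) * ⟪f' y, xstar - y⟫) :
    γ * (f y - f xstar) ≤ ⟪f' y, y - xstar⟫ := by
  rw [← neg_sub y xstar, inner_neg_right] at hqc
  field_simp at hqc
  linarith

variable [CompleteSpace E] {L : ℝ}

theorem le_add_inner_add_sq_of_lipschitz_gradient (hgrad : ∀ y, HasGradientAt f (f' y) y)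
    (hsmooth : ∀ y z, ‖f' y - f' z‖ ≤ L * ‖y - z‖) (y z : E) :
    f z ≤ f y + ⟪f' y, z - y⟫ + L / 2 * ‖z - y‖ ^ 2 := by
  set v := z - y
  set ψ : ℝ → ℝ := fun t => f y + t * ⟪f' y, v⟫ + L / 2 * t ^ 2 * ‖v‖ ^ 2 - f (y + t • v)
  have hψ : ∀ t, HasDerivAt ψ (⟪f' y, v⟫ + L * t * ‖v‖ ^ 2 - ⟪f' (y + t • v), v⟫) t := by
    intro t
    have hline : HasDerivAt (fun s : ℝ => y + s • v) v t := by
      simpa using ((hasDerivAt_id t).smul_const v).const_add y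
    have hf := (hgrad (y + t • v)).hasFDerivAt.comp_hasDerivAt t hline
    simp only [InnerProductSpace.toDual_apply_apply] at hf
    have := ((((hasDerivAt_id t).mul_const ⟪f' y, v⟫).const_add (f y)).add
      (((hasDerivAt_pow 2 t).const_mul (L / 2)).mul_const (‖v‖ ^ 2))).sub hf
    refine (show HasDerivAt ψ _ t from this).congr_deriv ?_
    ring
  have hmono : MonotoneOn ψ (Set.Ici 0) := by
    refine monotoneOn_of_hasDerivWithinAt_nonneg (convex_Ici 0)
      (fun t _ => (hψ t).continuousAt.continuousWithinAt)
      (fun t _ => (hψ t).hasDerivWithinAt) fun t ht => ?_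
    rw [interior_Ici, Set.mem_Ioi] at ht
    have hlip : ⟪f' (y + t • v) - f' y, v⟫ ≤ L * t * ‖v‖ ^ 2 := calc
      _ ≤ ‖f' (y + t • v) - f' y‖ * ‖v‖ := real_inner_le_norm _ _
      _ ≤ L * ‖t • v‖ * ‖v‖ := by
        gcongr
        simpa using hsmooth (y + t • v) y
      _ = L * t * ‖v‖ ^ 2 := by rw [norm_smul, Real.norm_of_nonneg ht.le]; ring
    rw [inner_sub_left] at hlip
    linarith
  have h01 : ψ 0 ≤ ψ 1 := hmono (Set.mem_Ici.2 le_rfl) (Set.mem_Ici.2 zero_le_one) zero_le_one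
  have hψ0 : ψ 0 = 0 := by simp [ψ]
  have hψ1 : ψ 1 = f y + ⟪f' y, v⟫ + L / 2 * ‖v‖ ^ 2 - f z := by simp [ψ, v]
  linarith

theorem norm_sq_le_two_mul_sub_of_lipschitz_gradient (hgrad : ∀ y, HasGradientAt f (f' y) y)
    (hsmooth : ∀ y z, ‖f' y - f' z‖ ≤ L * ‖y - z‖) (hL : 0 < L) {xstar : E}
    (hmin : ∀ y, f xstar ≤ f y) (y : E) :
    ‖f' y‖ ^ 2 ≤ 2 * L * (f y - f xstar) := by
  have hstep : y - L⁻¹ • f' y - y = -(L⁻¹ • f' y) := by abel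
  have hdescent := le_add_inner_add_sq_of_lipschitz_gradient hgrad hsmooth y (y - L⁻¹ • f' y)
  rw [hstep, inner_neg_right, real_inner_smul_right, real_inner_self_eq_norm_sq, norm_neg,
    norm_smul, Real.norm_of_nonneg (inv_nonneg.2 hL.le)] at hdescent
  have hhalf : L / 2 * (L⁻¹ * ‖f' y‖) ^ 2 = L⁻¹ * ‖f' y‖ ^ 2 / 2 := by field_simp
  rw [hhalf] at hdescent
  calc ‖f' y‖ ^ 2 = L * (L⁻¹ * ‖f' y‖ ^ 2) := by field_simp
    _ ≤ L * (2 * (f y - f xstar)) :=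
        mul_le_mul_of_nonneg_left (by linarith [hmin (y - L⁻¹ • f' y)]) hL.le
    _ = 2 * L * (f y - f xstar) := by ring

end Smooth

section Probability

variable {E : Type*} [NormedAddCommGroup E] [InnerProductSpace ℝ E]
  {Ω : Type*} {m mΩ : MeasurableSpace Ω} {P : Measure Ω}

theorem integrable_inner_of_memLp_two {u v : Ω → E} (hu : MemLp u 2 P) (hv : MemLp v 2 P) :
    Integrable (fun ω => ⟪u ω, v ω⟫) P :=
  memLp_one_iff_integrable.1 ((innerSL ℝ).memLp_of_bilin 1 hu hv)

theorem integral_norm_sub_smul_sub_sq {X G : Ω → E} {xstar : E} (a : ℝ)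
    (hX2 : MemLp (fun ω => X ω - xstar) 2 P) (hG2 : MemLp G 2 P) :
    ∫ ω, ‖X ω - a • G ω - xstar‖ ^ 2 ∂P = ∫ ω, ‖X ω - xstar‖ ^ 2 ∂P
      - 2 * a * ∫ ω, ⟪X ω - xstar, G ω⟫ ∂P + a ^ 2 * ∫ ω, ‖G ω‖ ^ 2 ∂P := by
  have hpoint : ∀ ω, ‖X ω - a • G ω - xstar‖ ^ 2
      = ‖X ω - xstar‖ ^ 2 - 2 * a * ⟪X ω - xstar, G ω⟫ + a ^ 2 * ‖G ω‖ ^ 2 := fun ω => by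
    rw [sub_right_comm, norm_sub_sq_real, real_inner_smul_right, norm_smul, mul_pow,
      Real.norm_eq_abs, sq_abs]
    ring
  have hY := (memLp_two_iff_integrable_sq_norm hX2.1).1 hX2
  have hXG := (integrable_inner_of_memLp_two hX2 hG2).const_mul (2 * a)
  have hG := ((memLp_two_iff_integrable_sq_norm hG2.1).1 hG2).const_mul (a ^ 2)
  simp_rw [hpoint]
  rw [integral_add (f := fun ω => ‖X ω - xstar‖ ^ 2 - 2 * a * ⟪X ω - xstar, G ω⟫)
    (hY.sub hXG) hG, integral_sub hY hXG, integral_const_mul, integral_const_mul]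

variable [CompleteSpace E]

section FiniteMeasure

variable [IsFiniteMeasure P]

theorem integral_inner_eq_of_condExp_ae_eq (hm : m ≤ mΩ) {H G W : Ω → E}
    (hH : StronglyMeasurable[m] H) (hHG : Integrable (fun ω => ⟪H ω, G ω⟫) P)
    (hG : Integrable G P) (hW : P[G | m] =ᵐ[P] W) :
    ∫ ω, ⟪H ω, G ω⟫ ∂P = ∫ ω, ⟪H ω, W ω⟫ ∂P := by
  rw [← integral_condExp hm]
  refine integral_congr_ae ?_
  filter_upwards [condExp_bilin_of_stronglyMeasurable_left (innerSL ℝ) hH hHG hG, hW]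
    with ω hω hWω
  rw [← hWω]
  exact hω

theorem integral_norm_sq_eq_add_of_condExp_ae_eq (hm : m ≤ mΩ) {G V : Ω → E}
    (hV : StronglyMeasurable[m] V) (hG : MemLp G 2 P) (hV2 : MemLp V 2 P)
    (hGV : P[G | m] =ᵐ[P] V) :
    ∫ ω, ‖G ω‖ ^ 2 ∂P = ∫ ω, ‖G ω - V ω‖ ^ 2 ∂P + ∫ ω, ‖V ω‖ ^ 2 ∂P := by
  have hcross : ∫ ω, ⟪V ω, G ω⟫ ∂P = ∫ ω, ‖V ω‖ ^ 2 ∂P := by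
    simp_rw [← real_inner_self_eq_norm_sq]
    exact integral_inner_eq_of_condExp_ae_eq hm hV (integrable_inner_of_memLp_two hV2 hG)
      (hG.integrable one_le_two) hGV
  have hG2 := (memLp_two_iff_integrable_sq_norm hG.1).1 hG
  have hV2' := (memLp_two_iff_integrable_sq_norm hV2.1).1 hV2
  have hVG := (integrable_inner_of_memLp_two hV2 hG).const_mul 2
  have hpoint : ∀ ω, ‖G ω - V ω‖ ^ 2 = ‖G ω‖ ^ 2 - 2 * ⟪V ω, G ω⟫ + ‖V ω‖ ^ 2 := fun ω => by
    rw [norm_sub_sq_real, real_inner_comm]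
  simp_rw [hpoint]
  rw [integral_add (f := fun ω => ‖G ω‖ ^ 2 - 2 * ⟪V ω, G ω⟫) (hG2.sub hVG) hV2',
    integral_sub hG2 hVG, integral_const_mul, hcross]
  ring

end FiniteMeasure

theorem integral_norm_sgd_step_sub_sq_le [IsProbabilityMeasure P] {f : E → ℝ} {f' : E → E}
    {L : ℝ} (hm : m ≤ mΩ) (hgrad : ∀ y, HasGradientAt f (f' y) y)
    (hsmooth : ∀ y z, ‖f' y - f' z‖ ≤ L * ‖y - z‖) (hL : 0 < L) {xstar : E}
    (hmin : ∀ y, f xstar ≤ f y) {γ σ a : ℝ} (hγ : 0 < γ)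
    (hqc : ∀ y, f xstar ≥ f y + (1 / γ) * ⟪f' y, xstar - y⟫) (ha : 0 ≤ a) {X G : Ω → E}
    (hX : StronglyMeasurable[m] X) (hG : Integrable G P)
    (hG2 : Integrable (fun ω => ‖G ω‖ ^ 2) P)
    (hunb : P[G | m] =ᵐ[P] fun ω => f' (X ω))
    (hvar : ∀ᵐ ω ∂P, P[fun ω' => ‖G ω' - f' (X ω')‖ ^ 2 | m] ω ≤ σ ^ 2)
    (hfX : Integrable (fun ω => f (X ω)) P)
    (hX2 : Integrable (fun ω => ‖X ω - xstar‖ ^ 2) P) :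
    ∫ ω, ‖X ω - a • G ω - xstar‖ ^ 2 ∂P ≤ ∫ ω, ‖X ω - xstar‖ ^ 2 ∂P
      - 2 * a * (γ - L * a) * (∫ ω, f (X ω) ∂P - f xstar) + a ^ 2 * σ ^ 2 := by
  set Δ := ∫ ω, f (X ω) ∂P - f xstar
  have hexcess : Integrable (fun ω => f (X ω) - f xstar) P := hfX.sub (integrable_const _)
  have hΔ : ∀ c, ∫ ω, c * (f (X ω) - f xstar) ∂P = c * Δ := fun c => by
    rw [integral_const_mul, integral_sub hfX (integrable_const _), integral_const]
    simp [Δ]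
  have hV : StronglyMeasurable[m] fun ω => f' (X ω) :=
    (LipschitzWith.of_dist_le' fun y z => by
      simpa only [dist_eq_norm] using hsmooth y z).continuous.comp_stronglyMeasurable hX
  have hVbound : ∀ ω, ‖f' (X ω)‖ ^ 2 ≤ 2 * L * (f (X ω) - f xstar) := fun ω =>
    norm_sq_le_two_mul_sub_of_lipschitz_gradient hgrad hsmooth hL hmin (X ω)
  have hV2 : MemLp (fun ω => f' (X ω)) 2 P := by
    refine (memLp_two_iff_integrable_sq_norm (hV.mono hm).aestronglyMeasurable).2
      ((hexcess.const_mul (2 * L)).mono'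
        ((hV.mono hm).aestronglyMeasurable.norm.pow 2) (ae_of_all _ fun ω => ?_))
    rw [Real.norm_of_nonneg (by positivity)]
    exact hVbound ω
  have hG2' : MemLp G 2 P := (memLp_two_iff_integrable_sq_norm hG.1).2 hG2
  have hY : StronglyMeasurable[m] fun ω => X ω - xstar := hX.sub stronglyMeasurable_const
  have hY2 : MemLp (fun ω => X ω - xstar) 2 P :=
    (memLp_two_iff_integrable_sq_norm (hY.mono hm).aestronglyMeasurable).2 hX2
  have hdrift : γ * Δ ≤ ∫ ω, ⟪X ω - xstar, G ω⟫ ∂P := by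
    rw [integral_inner_eq_of_condExp_ae_eq hm hY (integrable_inner_of_memLp_two hY2 hG2') hG hunb,
      ← hΔ]
    refine integral_mono (hexcess.const_mul γ)
      (integrable_inner_of_memLp_two hY2 hV2) fun ω => ?_
    rw [real_inner_comm]
    exact mul_sub_le_inner_of_quasarConvex hγ (hqc (X ω))
  have hvariance : ∫ ω, ‖G ω - f' (X ω)‖ ^ 2 ∂P ≤ σ ^ 2 := by
    rw [← integral_condExp hm]
    simpa using integral_mono_ae integrable_condExp (integrable_const (σ ^ 2)) hvar
  have hgradient : ∫ ω, ‖f' (X ω)‖ ^ 2 ∂P ≤ 2 * L * Δ := by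
    rw [← hΔ]
    exact integral_mono ((memLp_two_iff_integrable_sq_norm hV2.1).1 hV2)
      (hexcess.const_mul _) hVbound
  have hsecond : ∫ ω, ‖G ω‖ ^ 2 ∂P ≤ σ ^ 2 + 2 * L * Δ := by
    rw [integral_norm_sq_eq_add_of_condExp_ae_eq hm hV hG2' hV2 hunb]
    exact add_le_add hvariance hgradient
  rw [integral_norm_sub_smul_sub_sq a hY2 hG2']
  nlinarith [mul_le_mul_of_nonneg_left hdrift (by positivity : 0 ≤ 2 * a),
    mul_le_mul_of_nonneg_left hsecond (sq_nonneg a)]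

end Probability

theorem stronglyMeasurable_sgd_iterate {Ω E : Type*} [NormedAddCommGroup E]
    [NormedSpace ℝ E] [MeasurableSpace E] [BorelSpace E] [SecondCountableTopology E]
    {x g : ℕ → Ω → E} {α : ℕ → ℝ} {x₀ : E}
    (hx0 : x 0 = fun _ => x₀) (hstep : ∀ t, x (t + 1) = fun ω => x t ω - α (t + 1) • g t ω)
    (t : ℕ) :
    StronglyMeasurable[⨆ i ∈ range t, MeasurableSpace.comap (g i) inferInstance] (x t) := by
  refine Measurable.stronglyMeasurable ?_
  induction t with
  | zero => rw [hx0]; exact measurable_const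
  | succ t ih =>
    have hmono : (⨆ i ∈ range t, MeasurableSpace.comap (g i) inferInstance : MeasurableSpace Ω)
        ≤ ⨆ i ∈ range (t + 1), MeasurableSpace.comap (g i) inferInstance :=
      biSup_mono fun i hi => mem_range.2 (Nat.lt_succ_of_lt (mem_range.1 hi))
    have hg : Measurable[⨆ i ∈ range (t + 1), MeasurableSpace.comap (g i) inferInstance] (g t) :=
      (comap_measurable (g t)).mono
        (le_iSup₂ (f := fun i (_ : i ∈ range (t + 1)) => MeasurableSpace.comap (g i) inferInstance)
          t (self_mem_range_succ t)) le_rfl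
    rw [hstep t]
    exact (ih.mono hmono le_rfl).sub (hg.const_smul _)

theorem sgd_quasar_varying_steps_general
    {Ω : Type*} [MeasurableSpace Ω] (P : Measure Ω) [IsProbabilityMeasure P]
    {n : ℕ} (f : EuclideanSpace ℝ (Fin n) → ℝ)
    (f' : EuclideanSpace ℝ (Fin n) → EuclideanSpace ℝ (Fin n))
    (xstar x₀ : EuclideanSpace ℝ (Fin n))
    (L γ σ R : ℝ) (α : ℕ → ℝ) (T : ℕ)
    (x g : ℕ → Ω → EuclideanSpace ℝ (Fin n))
    (hgrad : ∀ y, HasGradientAt f (f' y) y)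
    (hmin : ∀ y, f xstar ≤ f y)
    (hγ0 : 0 < γ)
    (hqc : ∀ y, f xstar ≥ f y + (1/γ) * ⟪f' y, xstar - y⟫)
    (hsmooth : ∀ y z, ‖f' y - f' z‖ ≤ L * ‖y - z‖)
    (hR : ‖x₀ - xstar‖ ≤ R)
    (hα : ∀ t ∈ Finset.Icc 1 T, 0 < α t ∧ α t < γ/L)
    (hx0 : x 0 = fun _ => x₀)
    (hstep : ∀ t, x (t+1) = fun ω => x t ω - α (t+1) • g t ω)
    (hgmeas : ∀ t, Measurable (g t))
    (hgint : ∀ t, Integrable (g t) P)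
    (hgsqint : ∀ t, Integrable (fun ω => ‖g t ω‖^2) P)
    (hunbiased : ∀ t,
      MeasureTheory.condExp
          (⨆ i ∈ Finset.range t, MeasurableSpace.comap (g i) inferInstance) P (g t)
        =ᵐ[P] fun ω => f' (x t ω))
    (hvar : ∀ t, ∀ᵐ ω ∂P,
      MeasureTheory.condExp
          (⨆ i ∈ Finset.range t, MeasurableSpace.comap (g i) inferInstance) P
          (fun ω' => ‖g t ω' - f' (x t ω')‖^2) ω ≤ σ^2)
    (hfint : ∀ t, Integrable (fun ω => f (x t ω)) P)
    (hsqint : ∀ t, Integrable (fun ω => ‖x t ω - xstar‖^2) P)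
:    (∑ t ∈ Finset.range T, α (t+1)*(γ - L*α (t+1)) * (∫ ω, f (x t ω) ∂P - f xstar)) /
        (∑ t ∈ Finset.Icc 1 T, α t*(γ - L*α t))
      ≤ R^2/(2*∑ t ∈ Finset.Icc 1 T, α t*(γ - L*α t))
        + σ^2*(∑ t ∈ Finset.Icc 1 T, (α t)^2)/(∑ t ∈ Finset.Icc 1 T, α t*(γ - L*α t)) := by
  rcases Nat.eq_zero_or_pos T with rfl | hT
  · simp
  -- for `L ≤ 0` the step bound `γ / L` is nonpositive (also through `γ / 0 = 0`)
  have hL : 0 < L := by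
    by_contra! hL
    linarith [hα 1 (mem_Icc.2 ⟨le_rfl, hT⟩), div_nonpos_of_nonneg_of_nonpos hγ0.le hL]
  have hS : 0 < ∑ t ∈ Icc 1 T, α t * (γ - L * α t) := by
    refine sum_pos (fun t ht => ?_) ⟨1, mem_Icc.2 ⟨le_rfl, hT⟩⟩
    obtain ⟨hαt, hαγ⟩ := hα t ht
    rw [lt_div_iff₀ hL] at hαγ
    exact mul_pos hαt (by linarith)
  have hdescent : ∀ t < T, ∫ ω, ‖x (t + 1) ω - xstar‖ ^ 2 ∂P ≤ ∫ ω, ‖x t ω - xstar‖ ^ 2 ∂P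
      - 2 * (α (t + 1) * (γ - L * α (t + 1)) * (∫ ω, f (x t ω) ∂P - f xstar))
      + σ ^ 2 * α (t + 1) ^ 2 := fun t ht => by
    rw [hstep t]
    have := integral_norm_sgd_step_sub_sq_le
      (iSup₂_le fun i _ => (hgmeas i).comap_le) hgrad hsmooth hL hmin hγ0 hqc
      (hα (t + 1) (mem_Icc.2 ⟨le_add_self, ht⟩)).1.le (stronglyMeasurable_sgd_iterate hx0 hstep t)
      (hgint t) (hgsqint t) (hunbiased t) (hvar t) (hfint t) (hsqint t)
    linarith
  have hsum := sum_range_le_of_le_sub_add (D := fun t => ∫ ω, ‖x t ω - xstar‖ ^ 2 ∂P) hdescent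
    (integral_nonneg fun ω => by positivity)
  rw [hx0, ← mul_sum, ← mul_sum, ← sum_Icc_one_eq_sum_range (fun t => α t ^ 2)] at hsum
  simp only [integral_const, probReal_univ, one_smul] at hsum
  rw [← div_div, ← add_div]
  refine div_le_div_of_nonneg_right ?_ hS.le
  linarith [pow_le_pow_left₀ (norm_nonneg _) hR 2,
    (by positivity : 0 ≤ σ ^ 2 * ∑ t ∈ Icc 1 T, α t ^ 2)]

theorem sgd_quasar_varying_steps
    {Ω : Type*} [MeasurableSpace Ω] (P : Measure Ω) [IsProbabilityMeasure P]
    {n : ℕ} (f : EuclideanSpace ℝ (Fin n) → ℝ)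
    (f' : EuclideanSpace ℝ (Fin n) → EuclideanSpace ℝ (Fin n))
    (xstar x₀ : EuclideanSpace ℝ (Fin n))
    (L γ σ R : ℝ) (α : ℕ → ℝ) (T : ℕ)
    (x g : ℕ → Ω → EuclideanSpace ℝ (Fin n))
    (hgrad : ∀ y, HasGradientAt f (f' y) y)
    (hmin : ∀ y, f xstar ≤ f y)
    (hγ0 : 0 < γ) (hγ1 : γ ≤ 1)
    (hqc : ∀ y, f xstar ≥ f y + (1/γ) * ⟪f' y, xstar - y⟫)
    (hsmooth : ∀ y z, ‖f' y - f' z‖ ≤ L * ‖y - z‖)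
    (hR : ‖x₀ - xstar‖ ≤ R)
    (hα : ∀ t ∈ Finset.Icc 1 T, 0 < α t ∧ α t < γ/L)
    (hx0 : x 0 = fun _ => x₀)
    (hstep : ∀ t, x (t+1) = fun ω => x t ω - α (t+1) • g t ω)
    (hgmeas : ∀ t, Measurable (g t))
    (hgint : ∀ t, Integrable (g t) P)
    (hgsqint : ∀ t, Integrable (fun ω => ‖g t ω‖^2) P)
    (hunbiased : ∀ t,
      MeasureTheory.condExp
          (⨆ i ∈ Finset.range t, MeasurableSpace.comap (g i) inferInstance) P (g t)
        =ᵐ[P] fun ω => f' (x t ω))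
    (hvar : ∀ t, ∀ᵐ ω ∂P,
      MeasureTheory.condExp
          (⨆ i ∈ Finset.range t, MeasurableSpace.comap (g i) inferInstance) P
          (fun ω' => ‖g t ω' - f' (x t ω')‖^2) ω ≤ σ^2)
    (hfint : ∀ t, Integrable (fun ω => f (x t ω)) P)
    (hsqint : ∀ t, Integrable (fun ω => ‖x t ω - xstar‖^2) P)
:    (∑ t ∈ Finset.range T, α (t+1)*(γ - L*α (t+1)) * (∫ ω, f (x t ω) ∂P - f xstar)) /
        (∑ t ∈ Finset.Icc 1 T, α t*(γ - L*α t))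
      ≤ R^2/(2*∑ t ∈ Finset.Icc 1 T, α t*(γ - L*α t))
        + σ^2*(∑ t ∈ Finset.Icc 1 T, (α t)^2)/(∑ t ∈ Finset.Icc 1 T, α t*(γ - L*α t)) :=
  sgd_quasar_varying_steps_general P f f' xstar x₀ L γ σ R α T x g hgrad hmin hγ0 hqc hsmooth hR hα
    hx0 hstep hgmeas hgint hgsqint hunbiased hvar hfint hsqint
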